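/- Let φ(θ¹,θ²) = log Γ((θ¹−θ²)/2) + log Γ((θ¹+θ²)/2) − log Γ(θ¹) + (log 2)(θ¹−1) on the open domain D = {(θ¹,θ²) : θ¹+θ² > 0, θ¹−θ² > 0}, let G(θ) be the Hessian matrix of φ (the Fisher information matrix of the beta-logistic family), and assume det G(θ) ≠ 0 on D. Then for every real α, the function ω^{(α)}(θ) = (det G(θ))^{(1−α)/2} is an α-parallel prior: for i = 1, 2 and all θ ∈ D, ∂_i ω^{(α)}(θ) = ((1−α)/2) · ( Σ_{j,k=1}^{2} ∂_i∂_j∂_k φ(θ) · (G(θ)^{−1})_{jk} ) · ω^{(α)}(θ). -/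

import Mathlib

/-- Partial derivative of a two-variable function in the first variable. -/
noncomputable def D1 (f : ℝ → ℝ → ℝ) : ℝ → ℝ → ℝ := fun s t => deriv (fun u => f u t) s

/-- Partial derivative of a two-variable function in the second variable. -/
noncomputable def D2 (f : ℝ → ℝ → ℝ) : ℝ → ℝ → ℝ := fun s t => deriv (fun v => f s v) t

/-- The `i`-th partial derivative operator, `i : Fin 2`. -/
noncomputable def Pd (i : Fin 2) (f : ℝ → ℝ → ℝ) : ℝ → ℝ → ℝ :=
  if i = 0 then D1 f else D2 f

/-- The potential function of the beta-logistic exponential family: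
`φ(θ¹,θ²) = log Γ((θ¹−θ²)/2) + log Γ((θ¹+θ²)/2) − log Γ(θ¹) + (log 2)(θ¹−1)`. -/
noncomputable def potential (θ1 θ2 : ℝ) : ℝ :=
  Real.log (Real.Gamma ((θ1 - θ2) / 2)) + Real.log (Real.Gamma ((θ1 + θ2) / 2)) -
    Real.log (Real.Gamma θ1) + Real.log 2 * (θ1 - 1)

/-- The Fisher information matrix of the beta-logistic family: the Hessian of the
potential function in the natural coordinates. -/
noncomputable def fisherG (θ1 θ2 : ℝ) : Matrix (Fin 2) (Fin 2) ℝ :=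
  Matrix.of fun i j => Pd i (Pd j potential) θ1 θ2

/-!
Jacobi's formula gives `∂ᵢ det G = Σⱼₖ ∂ᵢGⱼₖ · adj(G)ₖⱼ = det G · Σⱼₖ ∂ᵢGⱼₖ · (G⁻¹)ₖⱼ`, and
`∂ᵢGⱼₖ = ∂ᵢ∂ⱼ∂ₖφ`. Since `G` is a Hessian it is symmetric, so `(G⁻¹)ₖⱼ = (G⁻¹)ⱼₖ`, and the power
rule for `(det G)^((1−α)/2)` yields the claim. The partial derivatives are honest derivatives
because `φ` is smooth on the domain (`1/Γ` is entire and `Γ > 0` on `(0, ∞)`).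
-/

open Function Module

theorem HasFDerivAt.Pd_eq {F : ℝ → ℝ → ℝ} {F' : ℝ × ℝ →L[ℝ] ℝ} {s t : ℝ}
    (hF : HasFDerivAt (uncurry F) F' (s, t)) (i : Fin 2) :
    Pd i F s t = F' (Basis.finTwoProd ℝ i) := by
  fin_cases i
  · have h := hF.comp_hasDerivAt s ((hasDerivAt_id s).prodMk (hasDerivAt_const s t))
    simpa [Pd, D1, Function.comp_def] using h.deriv
  · have h := hF.comp_hasDerivAt t ((hasDerivAt_const t s).prodMk (hasDerivAt_id t))
    simpa [Pd, D2, Function.comp_def] using h.deriv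

theorem Pd_eq_fderiv {F : ℝ → ℝ → ℝ} {s t : ℝ}
    (hF : DifferentiableAt ℝ (uncurry F) (s, t)) (i : Fin 2) :
    Pd i F s t = fderiv ℝ (uncurry F) (s, t) (Basis.finTwoProd ℝ i) :=
  hF.hasFDerivAt.Pd_eq i

theorem ContDiffOn.uncurry_Pd {n : WithTop ℕ∞} {F : ℝ → ℝ → ℝ} {U : Set (ℝ × ℝ)}
    (hF : ContDiffOn ℝ (n + 1) (uncurry F) U) (hU : IsOpen U) (i : Fin 2) :
    ContDiffOn ℝ n (uncurry (Pd i F)) U := by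
  refine ((hF.fderiv_of_isOpen hU le_rfl).clm_apply
    (contDiffOn_const (c := Basis.finTwoProd ℝ i))).congr fun p hp => ?_
  exact Pd_eq_fderiv ((hF.contDiffAt (hU.mem_nhds hp)).differentiableAt (by simp)) i

theorem Pd_comm {F : ℝ → ℝ → ℝ} {U : Set (ℝ × ℝ)} (hF : ContDiffOn ℝ 2 (uncurry F) U)
    (hU : IsOpen U) {s t : ℝ} (hst : (s, t) ∈ U) (i j : Fin 2) :
    Pd i (Pd j F) s t = Pd j (Pd i F) s t := by
  have hFst : ContDiffAt ℝ 2 (uncurry F) (s, t) := hF.contDiffAt (hU.mem_nhds hst)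
  have hd : DifferentiableAt ℝ (fderiv ℝ (uncurry F)) (s, t) :=
    (hFst.fderiv_right (m := 1) le_rfl).differentiableAt one_ne_zero
  have hsecond : ∀ k l : Fin 2, Pd k (Pd l F) s t =
      fderiv ℝ (fderiv ℝ (uncurry F)) (s, t) (Basis.finTwoProd ℝ k) (Basis.finTwoProd ℝ l) := by
    intro k l
    have hPd : uncurry (Pd l F) =ᶠ[nhds (s, t)]
        fun q => fderiv ℝ (uncurry F) q (Basis.finTwoProd ℝ l) := by
      filter_upwards [hU.mem_nhds hst] with q hq
      exact Pd_eq_fderiv ((hF.contDiffAt (hU.mem_nhds hq)).differentiableAt (by simp)) l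
    have hlin := (ContinuousLinearMap.apply ℝ ℝ (Basis.finTwoProd ℝ l)).hasFDerivAt.comp (s, t)
      hd.hasFDerivAt
    exact (hlin.congr_of_eventuallyEq hPd).Pd_eq k
  rw [hsecond, hsecond, hFst.isSymmSndFDerivAt (by simp)]

theorem HasFDerivAt.det_fin_two {𝕜 E : Type*} [NontriviallyNormedField 𝕜]
    [NormedAddCommGroup E] [NormedSpace 𝕜 E] {M : E → Matrix (Fin 2) (Fin 2) 𝕜}
    {M' : Fin 2 → Fin 2 → E →L[𝕜] 𝕜} {x : E}
    (hM : ∀ j k, HasFDerivAt (fun y => M y j k) (M' j k) x) :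
    HasFDerivAt (fun y => (M y).det) (∑ j, ∑ k, (M x).adjugate k j • M' j k) x := by
  simp only [Matrix.det_fin_two, Matrix.adjugate_fin_two, Fin.sum_univ_two]
  refine (((hM 0 0).mul (hM 1 1)).sub ((hM 0 1).mul (hM 1 0))).congr_fderiv ?_
  ext v
  simp
  ring

theorem Pd_det_rpow {M : ℝ → ℝ → Matrix (Fin 2) (Fin 2) ℝ} {s t : ℝ}
    (hM : ∀ j k, DifferentiableAt ℝ (uncurry fun s t => M s t j k) (s, t))
    (hsymm : (M s t).IsSymm) (hdet : (M s t).det ≠ 0) (c : ℝ) (i : Fin 2) :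
    Pd i (fun s t => (M s t).det ^ c) s t =
      c * (∑ j, ∑ k, Pd i (fun s t => M s t j k) s t * (M s t)⁻¹ j k) * (M s t).det ^ c := by
  have hJacobi := HasFDerivAt.det_fin_two (M := fun p : ℝ × ℝ => M p.1 p.2)
    fun j k => (hM j k).hasFDerivAt
  rw [(hJacobi.rpow_const (p := c) (Or.inl hdet)).Pd_eq (F := fun s t => (M s t).det ^ c) i]
  simp only [Pd_eq_fderiv (hM _ _), Matrix.inv_def, Ring.inverse_eq_inv', Matrix.smul_apply,
    hsymm.adjugate.apply, Real.rpow_sub_one hdet, smul_apply, sum_apply, smul_eq_mul,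
    Finset.mul_sum, Finset.sum_mul]
  refine Finset.sum_congr rfl fun j _ => Finset.sum_congr rfl fun k _ => ?_
  ring

theorem Real.contDiffAt_Gamma {n : WithTop ℕ∞} {x : ℝ} (hx : Real.Gamma x ≠ 0) :
    ContDiffAt ℝ n Real.Gamma x := by
  have hinv : ContDiff ℝ n fun y : ℝ => (Real.Gamma y)⁻¹ := by
    simpa [Complex.Gamma_ofReal, ← Complex.ofReal_inv] using
      (Complex.differentiable_one_div_Gamma.contDiff (n := n)).real_of_complex
  simpa [Pi.inv_def] using hinv.contDiffAt.inv (inv_ne_zero hx)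

theorem Real.contDiffAt_log_Gamma {n : WithTop ℕ∞} {x : ℝ} (hx : 0 < x) :
    ContDiffAt ℝ n (fun y => Real.log (Real.Gamma y)) x :=
  (Real.contDiffAt_Gamma (Real.Gamma_pos_of_pos hx).ne').log (Real.Gamma_pos_of_pos hx).ne'

def betaLogisticDomain : Set (ℝ × ℝ) := {p | 0 < p.1 + p.2 ∧ 0 < p.1 - p.2}

theorem isOpen_betaLogisticDomain : IsOpen betaLogisticDomain :=
  (isOpen_lt continuous_const (continuous_fst.add continuous_snd)).inter
    (isOpen_lt continuous_const (continuous_fst.sub continuous_snd))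

theorem contDiffOn_potential {n : WithTop ℕ∞} :
    ContDiffOn ℝ n (uncurry potential) betaLogisticDomain := by
  rintro ⟨θ1, θ2⟩ ⟨h1, h2⟩
  refine ContDiffAt.contDiffWithinAt ?_
  have hdiff := (Real.contDiffAt_log_Gamma (n := n) (x := (θ1 - θ2) / 2) (by linarith)).comp
    (θ1, θ2) (((contDiff_fst.sub contDiff_snd).div_const 2).contDiffAt)
  have hsum := (Real.contDiffAt_log_Gamma (n := n) (x := (θ1 + θ2) / 2) (by linarith)).comp
    (θ1, θ2) (((contDiff_fst.add contDiff_snd).div_const 2).contDiffAt)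
  have hfst := (Real.contDiffAt_log_Gamma (n := n) (x := θ1) (by linarith)).comp
    (θ1, θ2) contDiff_fst.contDiffAt
  exact ((hdiff.add hsum).sub hfst).add
    (contDiffAt_const.mul (contDiff_fst.contDiffAt.sub contDiffAt_const))

theorem fisherG_isSymm {θ1 θ2 : ℝ} (hθ : (θ1, θ2) ∈ betaLogisticDomain) :
    (fisherG θ1 θ2).IsSymm :=
  Matrix.IsSymm.ext fun i j => Pd_comm contDiffOn_potential isOpen_betaLogisticDomain hθ j i

theorem contDiffOn_fisherG_apply {n : WithTop ℕ∞} (j k : Fin 2) :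
    ContDiffOn ℝ n (uncurry fun s t => fisherG s t j k) betaLogisticDomain :=
  (contDiffOn_potential.uncurry_Pd isOpen_betaLogisticDomain k).uncurry_Pd
    isOpen_betaLogisticDomain j

/-- The beta-logistic family admits an α-parallel prior for every real `α`: assuming
`det G ≠ 0` on the domain `θ¹ ± θ² > 0`, the function `ω^{(α)} = (det G)^{(1−α)/2}`
satisfies `∂ᵢ ω^{(α)} = ((1−α)/2) (Σ_{j,k} ∂ᵢ∂ⱼ∂ₖφ · (G⁻¹)_{jk}) ω^{(α)}` there. -/
theorem alpha_parallel_prior (α : ℝ)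
    (hdet : ∀ θ1 θ2 : ℝ, 0 < θ1 + θ2 → 0 < θ1 - θ2 → (fisherG θ1 θ2).det ≠ 0) :
    ∀ θ1 θ2 : ℝ, 0 < θ1 + θ2 → 0 < θ1 - θ2 → ∀ i : Fin 2,
      Pd i (fun s t => (fisherG s t).det ^ ((1 - α) / 2)) θ1 θ2 =
        ((1 - α) / 2) *
          (∑ j : Fin 2, ∑ k : Fin 2,
            Pd i (Pd j (Pd k potential)) θ1 θ2 * (fisherG θ1 θ2)⁻¹ j k) *
          (fisherG θ1 θ2).det ^ ((1 - α) / 2) := by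
  intro θ1 θ2 h1 h2 i
  have hθ : (θ1, θ2) ∈ betaLogisticDomain := ⟨h1, h2⟩
  exact Pd_det_rpow
    (fun j k => ((contDiffOn_fisherG_apply (n := 1) j k).contDiffAt
      (isOpen_betaLogisticDomain.mem_nhds hθ)).differentiableAt one_ne_zero)
    (fisherG_isSymm hθ) (hdet θ1 θ2 h1 h2) _ i
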